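/- Assume Δ = x_i − x_j > 0. The swap between coordinates i and j strictly improves the objective (‖Ax' − b‖_∞ < t) if and only if (−t − s_k)/Δ < a_{kj} − a_{ki} < (t − s_k)/Δ for every row k. -/
import Mathlib


theorem stmt_6 (m n : ℕ) [NeZero m] (A : Matrix (Fin m) (Fin n) ℝ) (b : Fin m → ℝ)
    (x : Fin n → ℝ) (i j : Fin n) (hij : i ≠ j) (hgt : x j < x i)
    (x' : Fin n → ℝ) (hx' : x' = Function.update (Function.update x i (x j)) j (x i))
    (s : Fin m → ℝ) (hs : s = A.mulVec x - b)
    (t : ℝ) (ht : t = ‖s‖)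
    (Δ : ℝ) (hΔ : Δ = x i - x j) :
    ‖A.mulVec x' - b‖ < t ↔
      ∀ k, (-t - s k) / Δ < A k j - A k i ∧ A k j - A k i < (t - s k) / Δ := by
  have hΔpos : 0 < Δ := by rw [hΔ]; linarith
  have hkey : ∀ k, (A.mulVec x' - b) k = s k + Δ * (A k j - A k i) := by
    intro k
    have h1 : A.mulVec x' k - A.mulVec x k = ∑ l, A k l * (x' l - x l) := by
      simp [Matrix.mulVec, dotProduct, mul_sub, Finset.sum_sub_distrib]
    have h2 : ∑ l, A k l * (x' l - x l) = ∑ l ∈ ({i, j} : Finset (Fin n)),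
        A k l * (x' l - x l) := by
      refine (Finset.sum_subset (Finset.subset_univ _) ?_).symm
      intro l _ hl
      simp only [Finset.mem_insert, Finset.mem_singleton, not_or] at hl
      have : x' l = x l := by
        rw [hx', Function.update_of_ne hl.2, Function.update_of_ne hl.1]
      rw [this]; ring
    have hxi : x' i = x j := by
      rw [hx', Function.update_of_ne hij, Function.update_self]
    have hxj : x' j = x i := by rw [hx', Function.update_self]
    rw [Finset.sum_pair hij, hxi, hxj] at h2
    have : (A.mulVec x' - b) k = (A.mulVec x - b) k +
        (A.mulVec x' k - A.mulVec x k) := by simp only [Pi.sub_apply]; ring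
    rw [this, h1, h2, hs, hΔ]
    simp; ring
  have htnonneg : 0 ≤ t := ht ▸ norm_nonneg s
  rcases eq_or_lt_of_le htnonneg with h0 | hpos
  · -- t = 0, both sides false
    have hs0 : s = 0 := by
      have : ‖s‖ = 0 := by rw [← ht, ← h0]
      exact norm_eq_zero.mp this
    constructor
    · intro h; exact absurd (lt_of_le_of_lt (norm_nonneg _) h) (by rw [← h0]; simp)
    · intro h
      obtain ⟨h1, h2⟩ := h ⟨0, Nat.pos_of_ne_zero (NeZero.ne m)⟩
      rw [hs0] at h1 h2
      simp only [Pi.zero_apply, sub_zero] at h1 h2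
      rw [← h0] at h1 h2
      simp at h1 h2
      linarith
  · rw [pi_norm_lt_iff hpos]
    apply forall_congr'
    intro k
    rw [hkey k, Real.norm_eq_abs, abs_lt, div_lt_iff₀ hΔpos, lt_div_iff₀ hΔpos]
    constructor <;> rintro ⟨h1, h2⟩ <;> constructor <;> nlinarith
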